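/- arXiv:1707.02497 — 3 statements merged into one kernel-verified Lean document; each statement's English description precedes it below -/
import Mathlib

section
/- Let G(λ) = C(λE - A)^{-1}B + D be the transfer function of a continuous-time descriptor system with A, E ∈ ℂ^{n×n}, B ∈ ℂ^{n×m}, C ∈ ℂ^{p×n}, D ∈ ℂ^{p×m}. Suppose λE - A is regular with no finite eigenvalues on the imaginary axis, and γ > 0 is not a singular value of D. Then for ω ∈ ℝ, iω is an eigenvalue of the matrix pencil (M_γ, N) with M_γ = [[A - B R^{-1} D* C, -γ B R^{-1} B*], [γ C* S^{-1} C, -(A - B R^{-1} D* C)*]], N = [[E, 0], [0, E*]], R = D*D - γ²I, S = DD* - γ²I, if and only if γ is a singular value of G(iω). -/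
open Matrix Complex

/-- `γ` is a singular value of `M` (appropriate for `γ > 0`). -/
def IsSingularValue {p m : ℕ} (γ : ℝ) (M : Matrix (Fin p) (Fin m) ℂ) : Prop :=
  ∃ (u : Fin p → ℂ) (v : Fin m → ℂ), u ≠ 0 ∧ v ≠ 0 ∧
    M *ᵥ v = (γ : ℂ) • u ∧ Mᴴ *ᵥ u = (γ : ℂ) • v

noncomputable def Rmat {m p : ℕ} (D : Matrix (Fin p) (Fin m) ℂ) (γ : ℝ) :
    Matrix (Fin m) (Fin m) ℂ := Dᴴ * D - ((γ : ℂ) ^ 2) • 1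

noncomputable def Smat {m p : ℕ} (D : Matrix (Fin p) (Fin m) ℂ) (γ : ℝ) :
    Matrix (Fin p) (Fin p) ℂ := D * Dᴴ - ((γ : ℂ) ^ 2) • 1

lemma myElim_eq_zero_iff {α β : Type*} {x : α → ℂ} {y : β → ℂ} :
    Sum.elim x y = 0 ↔ x = 0 ∧ y = 0 := by
  constructor
  · intro h
    constructor <;> funext i
    · exact congrFun h (Sum.inl i)
    · exact congrFun h (Sum.inr i)
  · rintro ⟨rfl, rfl⟩
    funext i
    cases i <;> rfl

lemma Rmat_det_isUnit {m p : ℕ} {D : Matrix (Fin p) (Fin m) ℂ} {γ : ℝ}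
    (hγ : 0 < γ) (hD : ¬ IsSingularValue γ D) : IsUnit (Rmat D γ).det := by
  have hγc : (γ : ℂ) ≠ 0 := by
    simpa using (Complex.ofReal_ne_zero.mpr hγ.ne')
  rw [isUnit_iff_ne_zero]
  intro h
  obtain ⟨v, hv, hv0⟩ := Matrix.exists_mulVec_eq_zero_iff.mpr h
  have hDv : Dᴴ *ᵥ (D *ᵥ v) = ((γ:ℂ)^2) • v := by
    have h1 : (Dᴴ * D) *ᵥ v - ((γ:ℂ)^2) • v = 0 := by
      simpa [Rmat, Matrix.sub_mulVec, Matrix.smul_mulVec] using hv0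
    rw [sub_eq_zero] at h1
    rw [Matrix.mulVec_mulVec]
    exact h1
  have hDvne : D *ᵥ v ≠ 0 := by
    intro h0
    apply hv
    rw [h0, Matrix.mulVec_zero] at hDv
    have := hDv.symm
    rcases smul_eq_zero.mp this with h | h
    · exact absurd h (pow_ne_zero 2 hγc)
    · exact h
  refine hD ⟨(γ:ℂ)⁻¹ • (D *ᵥ v), v, ?_, hv, ?_, ?_⟩
  · exact smul_ne_zero (inv_ne_zero hγc) hDvne
  · rw [smul_smul, mul_inv_cancel₀ hγc, one_smul]
  · rw [Matrix.mulVec_smul, hDv, smul_smul]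
    congr 1
    field_simp

lemma Smat_det_isUnit {m p : ℕ} {D : Matrix (Fin p) (Fin m) ℂ} {γ : ℝ}
    (hγ : 0 < γ) (hD : ¬ IsSingularValue γ D) : IsUnit (Smat D γ).det := by
  have hγc : (γ : ℂ) ≠ 0 := by
    simpa using (Complex.ofReal_ne_zero.mpr hγ.ne')
  rw [isUnit_iff_ne_zero]
  intro h
  obtain ⟨u, hu, hu0⟩ := Matrix.exists_mulVec_eq_zero_iff.mpr h
  have hDu : D *ᵥ (Dᴴ *ᵥ u) = ((γ:ℂ)^2) • u := by
    have h1 : (D * Dᴴ) *ᵥ u - ((γ:ℂ)^2) • u = 0 := by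
      simpa [Smat, Matrix.sub_mulVec, Matrix.smul_mulVec] using hu0
    rw [sub_eq_zero] at h1
    rw [Matrix.mulVec_mulVec]
    exact h1
  have hDune : Dᴴ *ᵥ u ≠ 0 := by
    intro h0
    apply hu
    rw [h0, Matrix.mulVec_zero] at hDu
    rcases smul_eq_zero.mp hDu.symm with h | h
    · exact absurd h (pow_ne_zero 2 hγc)
    · exact h
  refine hD ⟨u, (γ:ℂ)⁻¹ • (Dᴴ *ᵥ u), hu, ?_, ?_, ?_⟩
  · exact smul_ne_zero (inv_ne_zero hγc) hDune
  · rw [Matrix.mulVec_smul, hDu, smul_smul]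
    congr 1
    field_simp
  · rw [smul_smul, mul_inv_cancel₀ hγc, one_smul]

section identities

variable {m p : ℕ} (D : Matrix (Fin p) (Fin m) ℂ) (γ : ℝ)

lemma Rmat_herm : (Rmat D γ)ᴴ = Rmat D γ := by
  simp [Rmat, conjTranspose_smul, Complex.star_def, ← Complex.ofReal_pow]

lemma Smat_herm : (Smat D γ)ᴴ = Smat D γ := by
  simp [Smat, conjTranspose_smul, Complex.star_def, ← Complex.ofReal_pow]

lemma SD_comm : Smat D γ * D = D * Rmat D γ := by
  simp only [Smat, Rmat, Matrix.sub_mul, Matrix.mul_sub, Matrix.smul_mul, Matrix.mul_smul,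
    Matrix.one_mul, Matrix.mul_one, Matrix.mul_assoc]

lemma inv_comm1 (hR : IsUnit (Rmat D γ).det) (hS : IsUnit (Smat D γ).det) :
    (Smat D γ)⁻¹ * D = D * (Rmat D γ)⁻¹ := by
  calc (Smat D γ)⁻¹ * D = (Smat D γ)⁻¹ * (D * (Rmat D γ * (Rmat D γ)⁻¹)) := by
        rw [Matrix.mul_nonsing_inv _ hR, Matrix.mul_one]
    _ = (Smat D γ)⁻¹ * (Smat D γ * (D * (Rmat D γ)⁻¹)) := by
        rw [← Matrix.mul_assoc D, ← SD_comm, Matrix.mul_assoc]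
    _ = D * (Rmat D γ)⁻¹ := by
        rw [← Matrix.mul_assoc, Matrix.nonsing_inv_mul _ hS, Matrix.one_mul]

lemma inv_comm2 (hR : IsUnit (Rmat D γ).det) (hS : IsUnit (Smat D γ).det) :
    (Rmat D γ)⁻¹ * Dᴴ = Dᴴ * (Smat D γ)⁻¹ := by
  have := congrArg conjTranspose (inv_comm1 D γ hR hS)
  simpa [Matrix.conjTranspose_mul, Matrix.conjTranspose_nonsing_inv,
    Rmat_herm, Smat_herm] using this.symm

lemma mid3 (hR : IsUnit (Rmat D γ).det) :
    (Rmat D γ)⁻¹ * Dᴴ * D = 1 + ((γ:ℂ)^2) • (Rmat D γ)⁻¹ := by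
  have hDD : Dᴴ * D = Rmat D γ + ((γ:ℂ)^2) • 1 := by simp [Rmat]
  rw [Matrix.mul_assoc, hDD, Matrix.mul_add, Matrix.mul_smul, Matrix.mul_one,
    Matrix.nonsing_inv_mul _ hR]

lemma mid3' (hR : IsUnit (Rmat D γ).det) :
    Dᴴ * D * (Rmat D γ)⁻¹ = 1 + ((γ:ℂ)^2) • (Rmat D γ)⁻¹ := by
  have hDD : Dᴴ * D = Rmat D γ + ((γ:ℂ)^2) • 1 := by simp [Rmat]
  rw [hDD, Matrix.add_mul, Matrix.smul_mul, Matrix.one_mul,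
    Matrix.mul_nonsing_inv _ hR]

lemma mid2 (hR : IsUnit (Rmat D γ).det) (hS : IsUnit (Smat D γ).det) :
    D * (Rmat D γ)⁻¹ * Dᴴ = 1 + ((γ:ℂ)^2) • (Smat D γ)⁻¹ := by
  have hDD : D * Dᴴ = Smat D γ + ((γ:ℂ)^2) • 1 := by simp [Smat]
  rw [← inv_comm1 D γ hR hS, Matrix.mul_assoc, hDD, Matrix.mul_add, Matrix.mul_smul,
    Matrix.mul_one, Matrix.nonsing_inv_mul _ hS]

-- vector identities
lemma iv1 (hR : IsUnit (Rmat D γ).det) (hS : IsUnit (Smat D γ).det) (w : Fin m → ℂ) :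
    (Smat D γ)⁻¹ *ᵥ (D *ᵥ w) = D *ᵥ ((Rmat D γ)⁻¹ *ᵥ w) := by
  simp only [Matrix.mulVec_mulVec]
  rw [inv_comm1 D γ hR hS]

lemma iv1' (hR : IsUnit (Rmat D γ).det) (hS : IsUnit (Smat D γ).det) (w : Fin p → ℂ) :
    (Rmat D γ)⁻¹ *ᵥ (Dᴴ *ᵥ w) = Dᴴ *ᵥ ((Smat D γ)⁻¹ *ᵥ w) := by
  simp only [Matrix.mulVec_mulVec]
  rw [inv_comm2 D γ hR hS]

lemma iv2 (hR : IsUnit (Rmat D γ).det) (hS : IsUnit (Smat D γ).det) (w : Fin p → ℂ) :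
    D *ᵥ ((Rmat D γ)⁻¹ *ᵥ (Dᴴ *ᵥ w)) = w + ((γ:ℂ)^2) • ((Smat D γ)⁻¹ *ᵥ w) := by
  simp only [Matrix.mulVec_mulVec]
  rw [← Matrix.mul_assoc, mid2 D γ hR hS, Matrix.add_mulVec, Matrix.smul_mulVec, Matrix.one_mulVec]

lemma iv3 (hR : IsUnit (Rmat D γ).det) (w : Fin m → ℂ) :
    (Rmat D γ)⁻¹ *ᵥ (Dᴴ *ᵥ (D *ᵥ w)) = w + ((γ:ℂ)^2) • ((Rmat D γ)⁻¹ *ᵥ w) := by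
  simp only [Matrix.mulVec_mulVec]
  rw [← Matrix.mul_assoc, mid3 D γ hR, Matrix.add_mulVec, Matrix.smul_mulVec, Matrix.one_mulVec]

lemma iv3' (hR : IsUnit (Rmat D γ).det) (w : Fin m → ℂ) :
    Dᴴ *ᵥ (D *ᵥ ((Rmat D γ)⁻¹ *ᵥ w)) = w + ((γ:ℂ)^2) • ((Rmat D γ)⁻¹ *ᵥ w) := by
  simp only [Matrix.mulVec_mulVec]
  rw [← Matrix.mul_assoc, mid3' D γ hR, Matrix.add_mulVec, Matrix.smul_mulVec, Matrix.one_mulVec]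

end identities

lemma fromBlocks_sub' {n : ℕ} (A B C D A' B' C' D' : Matrix (Fin n) (Fin n) ℂ) :
    fromBlocks A B C D - fromBlocks A' B' C' D' =
      fromBlocks (A - A') (B - B') (C - C') (D - D') := by
  ext i j
  cases i <;> cases j <;> simp [fromBlocks]


/-- The matrix `M_γ` of the continuous-time pencil. -/
noncomputable def Mpencil {n m p : ℕ} (A : Matrix (Fin n) (Fin n) ℂ)
    (B : Matrix (Fin n) (Fin m) ℂ) (C : Matrix (Fin p) (Fin n) ℂ)
    (D : Matrix (Fin p) (Fin m) ℂ) (γ : ℝ) :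
    Matrix (Fin n ⊕ Fin n) (Fin n ⊕ Fin n) ℂ :=
  fromBlocks (A - B * (Rmat D γ)⁻¹ * Dᴴ * C) (-((γ : ℂ) • (B * (Rmat D γ)⁻¹ * Bᴴ)))
    ((γ : ℂ) • (Cᴴ * (Smat D γ)⁻¹ * C)) (-(A - B * (Rmat D γ)⁻¹ * Dᴴ * C)ᴴ)

/-- The matrix `N` of the continuous-time pencil. -/
def Npencil {n : ℕ} (E : Matrix (Fin n) (Fin n) ℂ) :
    Matrix (Fin n ⊕ Fin n) (Fin n ⊕ Fin n) ℂ :=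
  fromBlocks E 0 0 Eᴴ

/-- Theorem 1 (continuous time): `iω` is an eigenvalue of the pencil `(M_γ, N)`
iff `γ` is a singular value of `G(iω) = C (iωE - A)⁻¹ B + D`. -/
theorem imaginary_eig_iff_singular_value {n m p : ℕ}
    (A E : Matrix (Fin n) (Fin n) ℂ) (B : Matrix (Fin n) (Fin m) ℂ)
    (C : Matrix (Fin p) (Fin n) ℂ) (D : Matrix (Fin p) (Fin m) ℂ)
    (γ : ℝ) (hγ : 0 < γ) (hD : ¬ IsSingularValue γ D)
    (hreg : ∀ w : ℝ, IsUnit ((Complex.I * (w : ℂ)) • E - A))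
    (ω : ℝ) :
    ((Complex.I * (ω : ℂ)) • Npencil E - Mpencil A B C D γ).det = 0 ↔
      IsSingularValue γ (C * ((Complex.I * (ω : ℂ)) • E - A)⁻¹ * B + D) := by
  have hγc : (γ : ℂ) ≠ 0 := by simpa using Complex.ofReal_ne_zero.mpr hγ.ne'
  have hR := Rmat_det_isUnit hγ hD
  have hS := Smat_det_isUnit hγ hD
  set s : ℂ := Complex.I * (ω : ℂ) with hs
  set L : Matrix (Fin n) (Fin n) ℂ := s • E - A with hLdef
  have hLd : IsUnit L.det := (Matrix.isUnit_iff_isUnit_det _).mp (hreg ω)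
  have hLHd : IsUnit (Lᴴ).det := by rw [Matrix.det_conjTranspose]; exact hLd.star
  have hstars : star s = -s := by
    rw [hs]
    simp [Complex.star_def]
  have hLH : Lᴴ = -(s • Eᴴ) - Aᴴ := by
    rw [hLdef]
    rw [Matrix.conjTranspose_sub, Matrix.conjTranspose_smul, hstars, neg_smul]
  have hRinvH : ((Rmat D γ)⁻¹)ᴴ = (Rmat D γ)⁻¹ := by
    rw [Matrix.conjTranspose_nonsing_inv, Rmat_herm]
  have hGH : (C * L⁻¹ * B + D)ᴴ = Bᴴ * (Lᴴ)⁻¹ * Cᴴ + Dᴴ := by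
    simp [Matrix.conjTranspose_add, Matrix.conjTranspose_mul,
      Matrix.conjTranspose_nonsing_inv, Matrix.mul_assoc]
  have hP : s • Npencil E - Mpencil A B C D γ =
      fromBlocks (L + B * (Rmat D γ)⁻¹ * Dᴴ * C) ((γ:ℂ) • (B * (Rmat D γ)⁻¹ * Bᴴ))
        (-((γ:ℂ) • (Cᴴ * (Smat D γ)⁻¹ * C))) (-(Lᴴ + Cᴴ * D * (Rmat D γ)⁻¹ * Bᴴ)) := by
    unfold Npencil Mpencil
    rw [Matrix.fromBlocks_smul, fromBlocks_sub', Matrix.fromBlocks_inj]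
    refine ⟨by rw [hLdef]; module, by simp, by simp, ?_⟩
    rw [hLH]
    simp only [Matrix.conjTranspose_sub, Matrix.conjTranspose_mul,
      Matrix.conjTranspose_conjTranspose, hRinvH, smul_zero, Matrix.mul_assoc]
    module
  rw [hP, ← Matrix.exists_mulVec_eq_zero_iff]
  constructor
  · rintro ⟨z, hz0, hz⟩
    rw [Matrix.fromBlocks_mulVec] at hz
    set x : Fin n → ℂ := z ∘ Sum.inl with hx
    set y : Fin n → ℂ := z ∘ Sum.inr with hy
    obtain ⟨hE1, hE2⟩ := myElim_eq_zero_iff.mp hz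
    set v : Fin m → ℂ :=
      -((Rmat D γ)⁻¹ *ᵥ (Dᴴ *ᵥ (C *ᵥ x)) + (γ:ℂ) • ((Rmat D γ)⁻¹ *ᵥ (Bᴴ *ᵥ y))) with hv
    set u : Fin p → ℂ :=
      -((γ:ℂ) • ((Smat D γ)⁻¹ *ᵥ (C *ᵥ x)) + D *ᵥ ((Rmat D γ)⁻¹ *ᵥ (Bᴴ *ᵥ y))) with hu
    have hLx : L *ᵥ x = B *ᵥ v := by
      rw [hv]
      simp only [Matrix.mulVec_neg, Matrix.mulVec_add, Matrix.mulVec_smul]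
      have h1 := hE1
      simp only [Matrix.add_mulVec, Matrix.smul_mulVec,
        ← Matrix.mulVec_mulVec] at h1
      linear_combination (norm := module) h1
    have hLy : Lᴴ *ᵥ y = Cᴴ *ᵥ u := by
      rw [hu]
      simp only [Matrix.mulVec_neg, Matrix.mulVec_add, Matrix.mulVec_smul]
      have h2 := hE2
      simp only [Matrix.neg_mulVec, Matrix.add_mulVec, Matrix.smul_mulVec,
        ← Matrix.mulVec_mulVec] at h2
      linear_combination (norm := module) -h2
    have hGv : (C * L⁻¹ * B + D) *ᵥ v = (γ:ℂ) • u := by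
      have hcol : C *ᵥ (L⁻¹ *ᵥ (B *ᵥ v)) = C *ᵥ x := by
        rw [← hLx]
        simp only [Matrix.mulVec_mulVec]
        rw [Matrix.nonsing_inv_mul _ hLd, Matrix.mul_one]
      simp only [Matrix.add_mulVec, ← Matrix.mulVec_mulVec]
      rw [hcol]
      conv_lhs => rw [hv]
      conv_rhs => rw [hu]
      simp only [Matrix.mulVec_neg, Matrix.mulVec_add, Matrix.mulVec_smul]
      rw [iv2 D γ hR hS (C *ᵥ x)]
      module
    have hGu : (C * L⁻¹ * B + D)ᴴ *ᵥ u = (γ:ℂ) • v := by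
      rw [hGH]
      simp only [Matrix.add_mulVec, ← Matrix.mulVec_mulVec]
      have hcol : (Lᴴ)⁻¹ *ᵥ (Cᴴ *ᵥ u) = y := by
        rw [← hLy]
        simp only [Matrix.mulVec_mulVec]
        rw [Matrix.nonsing_inv_mul _ hLHd, Matrix.one_mulVec]
      rw [hcol]
      conv_lhs => rw [hu]
      conv_rhs => rw [hv]
      simp only [Matrix.mulVec_neg, Matrix.mulVec_add, Matrix.mulVec_smul]
      rw [← iv1' D γ hR hS (C *ᵥ x), iv3' D γ hR (Bᴴ *ᵥ y)]
      module
    have hvne : v ≠ 0 := by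
      intro h0
      have hx0 : x = 0 := by
        have hl0 : L *ᵥ x = 0 := by rw [hLx, h0, Matrix.mulVec_zero]
        calc x = (L⁻¹ * L) *ᵥ x := by
              rw [Matrix.nonsing_inv_mul _ hLd, Matrix.one_mulVec]
          _ = L⁻¹ *ᵥ (L *ᵥ x) := by rw [Matrix.mulVec_mulVec]
          _ = 0 := by rw [hl0, Matrix.mulVec_zero]
      have hu0 : u = 0 := by
        have h1 : (γ:ℂ) • u = 0 := by rw [← hGv, h0, Matrix.mulVec_zero]
        rcases smul_eq_zero.mp h1 with h | h
        · exact absurd h hγc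
        · exact h
      have hy0 : y = 0 := by
        have hl0 : Lᴴ *ᵥ y = 0 := by rw [hLy, hu0, Matrix.mulVec_zero]
        calc y = ((Lᴴ)⁻¹ * Lᴴ) *ᵥ y := by
              rw [Matrix.nonsing_inv_mul _ hLHd, Matrix.one_mulVec]
          _ = (Lᴴ)⁻¹ *ᵥ (Lᴴ *ᵥ y) := by rw [Matrix.mulVec_mulVec]
          _ = 0 := by rw [hl0, Matrix.mulVec_zero]
      apply hz0
      have : z = Sum.elim x y := (Sum.elim_comp_inl_inr z).symm
      rw [this, hx0, hy0]
      exact myElim_eq_zero_iff.mpr ⟨rfl, rfl⟩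
    have hune : u ≠ 0 := by
      intro h0
      apply hvne
      have h1 : (γ:ℂ) • v = 0 := by rw [← hGu, h0, Matrix.mulVec_zero]
      rcases smul_eq_zero.mp h1 with h | h
      · exact absurd h hγc
      · exact h
    exact ⟨u, v, hune, hvne, hGv, hGu⟩
  · rintro ⟨u, v, hu, hv, hGv, hGu⟩
    set x : Fin n → ℂ := L⁻¹ *ᵥ (B *ᵥ v) with hx
    set y : Fin n → ℂ := (Lᴴ)⁻¹ *ᵥ (Cᴴ *ᵥ u) with hy
    have hLx : L *ᵥ x = B *ᵥ v := by
      rw [hx]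
      simp only [Matrix.mulVec_mulVec]
      rw [← Matrix.mul_assoc, Matrix.mul_nonsing_inv _ hLd, Matrix.one_mul]
    have hLy : Lᴴ *ᵥ y = Cᴴ *ᵥ u := by
      rw [hy]
      simp only [Matrix.mulVec_mulVec]
      rw [← Matrix.mul_assoc, Matrix.mul_nonsing_inv _ hLHd, Matrix.one_mul]
    have hCx : C *ᵥ x = (γ:ℂ) • u - D *ᵥ v := by
      have h1 := hGv
      simp only [Matrix.add_mulVec, ← Matrix.mulVec_mulVec] at h1
      rw [← hx] at h1
      linear_combination (norm := module) h1
    have hBy : Bᴴ *ᵥ y = (γ:ℂ) • v - Dᴴ *ᵥ u := by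
      have h2 := hGu
      rw [hGH] at h2
      simp only [Matrix.add_mulVec, ← Matrix.mulVec_mulVec] at h2
      rw [← hy] at h2
      linear_combination (norm := module) h2
    refine ⟨Sum.elim x y, ?_, ?_⟩
    · intro h0
      obtain ⟨hx0, hy0⟩ := myElim_eq_zero_iff.mp h0
      apply hD
      refine ⟨u, v, hu, hv, ?_, ?_⟩
      · rw [hx0, Matrix.mulVec_zero] at hCx
        linear_combination (norm := module) hCx
      · rw [hy0, Matrix.mulVec_zero] at hBy
        linear_combination (norm := module) hBy
    · rw [Matrix.fromBlocks_mulVec]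
      simp only [Sum.elim_comp_inl, Sum.elim_comp_inr]
      rw [myElim_eq_zero_iff]
      refine ⟨?_, ?_⟩
      · simp only [Matrix.add_mulVec, Matrix.smul_mulVec, ← Matrix.mulVec_mulVec]
        rw [hLx, hCx, hBy]
        simp only [Matrix.mulVec_sub, Matrix.mulVec_smul]
        rw [iv3 D γ hR v]
        simp only [Matrix.mulVec_add, Matrix.mulVec_smul]
        module
      · simp only [Matrix.neg_mulVec, Matrix.add_mulVec, Matrix.smul_mulVec,
          ← Matrix.mulVec_mulVec]
        rw [hLy, hCx, hBy]
        simp only [Matrix.mulVec_sub, Matrix.mulVec_smul]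
        rw [iv1 D γ hR hS v, iv2 D γ hR hS u]
        simp only [Matrix.mulVec_add, Matrix.mulVec_smul]
        module
end

section
/- Let γ be a singular value of G(e^{iθ}) = C(e^{iθ}E - A)^{-1}B + D with left and right singular vectors u and v (G(e^{iθ})v = γu and G(e^{iθ})*u = γv), where e^{iθ}E - A is invertible and γ is not a singular value of D. Define q = (e^{iθ}E - A)^{-1}Bv and s = (e^{-iθ}E* - A*)^{-1}C*u. Then the vector (q, s) is nonzero and satisfies e^{iθ} [[E, 0], [-γC*S^{-1}C, A* - C*DR^{-1}B*]] (q,s) = [[A - BR^{-1}D*C, -γBR^{-1}B*], [0, E*]] (q,s), where R = D*D - γ²I and S = DD* - γ²I. -/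
open Matrix Complex

/-- If `γ` is a singular value of `G(e^{iθ})` with singular vectors `u, v`, then
`(q,s)` with `q = (e^{iθ}E - A)⁻¹ B v` and `s = (e^{-iθ}E* - A*)⁻¹ C* u` is a nonzero
vector satisfying the generalized eigenvalue equation of the discrete-time pencil. -/
theorem singular_vectors_give_pencil_eigenvector {n m p : ℕ}
    (A E : Matrix (Fin n) (Fin n) ℂ) (B : Matrix (Fin n) (Fin m) ℂ)
    (C : Matrix (Fin p) (Fin n) ℂ) (D : Matrix (Fin p) (Fin m) ℂ)
    (θ γ : ℝ) (hγ : 0 < γ) (hD : ¬ IsSingularValue γ D)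
    (hZ : IsUnit (Complex.exp (Complex.I * (θ : ℂ)) • E - A))
    (u : Fin p → ℂ) (v : Fin m → ℂ) (hu : u ≠ 0) (hv : v ≠ 0)
    (hGv : (C * (Complex.exp (Complex.I * (θ : ℂ)) • E - A)⁻¹ * B + D) *ᵥ v = (γ : ℂ) • u)
    (hGu : (C * (Complex.exp (Complex.I * (θ : ℂ)) • E - A)⁻¹ * B + D)ᴴ *ᵥ u = (γ : ℂ) • v)
    (q s : Fin n → ℂ)
    (hq : q = (Complex.exp (Complex.I * (θ : ℂ)) • E - A)⁻¹ *ᵥ (B *ᵥ v))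
    (hs : s = (Complex.exp (-(Complex.I * (θ : ℂ))) • Eᴴ - Aᴴ)⁻¹ *ᵥ (Cᴴ *ᵥ u)) :
    Sum.elim q s ≠ 0 ∧
    Complex.exp (Complex.I * (θ : ℂ)) •
        (fromBlocks E 0 (-((γ : ℂ) • (Cᴴ * (Smat D γ)⁻¹ * C)))
            (Aᴴ - Cᴴ * D * (Rmat D γ)⁻¹ * Bᴴ) *ᵥ Sum.elim q s) =
      fromBlocks (A - B * (Rmat D γ)⁻¹ * Dᴴ * C) (-((γ : ℂ) • (B * (Rmat D γ)⁻¹ * Bᴴ)))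
          0 Eᴴ *ᵥ Sum.elim q s := by
  set z : ℂ := Complex.exp (Complex.I * (θ : ℂ)) with hzdef
  have hγc : (γ : ℂ) ≠ 0 := by exact_mod_cast hγ.ne'
  have hconj : (starRingEnd ℂ) (Complex.I * (θ : ℂ)) = -(Complex.I * (θ : ℂ)) := by
    simp [Complex.conj_ofReal]
  have hzc : Complex.exp (-(Complex.I * (θ : ℂ))) = (starRingEnd ℂ) z := by
    rw [hzdef, ← Complex.exp_conj, hconj]
  have hz1 : z * (starRingEnd ℂ) z = 1 := by
    rw [hzdef, ← Complex.exp_conj, hconj, ← Complex.exp_add]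
    simp
  set Z : Matrix (Fin n) (Fin n) ℂ := z • E - A with hZdef
  have hZd : IsUnit Z.det := (Matrix.isUnit_iff_isUnit_det Z).mp hZ
  have hZH : Complex.exp (-(Complex.I * (θ : ℂ))) • Eᴴ - Aᴴ = Zᴴ := by
    rw [hzc, hZdef, Matrix.conjTranspose_sub, Matrix.conjTranspose_smul, starRingEnd_apply]
  have hZHd : IsUnit Zᴴ.det := by
    rw [Matrix.det_conjTranspose]
    exact hZd.star
  -- basic vector equations
  have hq' : Z *ᵥ q = B *ᵥ v := by
    rw [hq, Matrix.mulVec_mulVec, Matrix.mul_nonsing_inv _ hZd, Matrix.one_mulVec]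
  have hs' : Zᴴ *ᵥ s = Cᴴ *ᵥ u := by
    rw [hs, hZH, Matrix.mulVec_mulVec, Matrix.mul_nonsing_inv _ hZHd, Matrix.one_mulVec]
  have hGv' : C *ᵥ q + D *ᵥ v = (γ : ℂ) • u := by
    rw [hq]
    rw [Matrix.add_mulVec] at hGv
    simpa [Matrix.mulVec_mulVec, Matrix.mul_assoc] using hGv
  have hGu' : Bᴴ *ᵥ s + Dᴴ *ᵥ u = (γ : ℂ) • v := by
    rw [hs, hZH]
    rw [Matrix.conjTranspose_add, Matrix.conjTranspose_mul, Matrix.conjTranspose_mul,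
      Matrix.conjTranspose_nonsing_inv, Matrix.add_mulVec] at hGu
    simpa [Matrix.mulVec_mulVec, Matrix.mul_assoc] using hGu
  have hDu : Dᴴ *ᵥ u = (γ : ℂ) • v - Bᴴ *ᵥ s := eq_sub_of_add_eq' hGu'
  have hDv : D *ᵥ v = (γ : ℂ) • u - C *ᵥ q := eq_sub_of_add_eq' hGv'
  -- R and S applied to v, u
  have hRv : Rmat D γ *ᵥ v = -(Dᴴ *ᵥ (C *ᵥ q) + (γ : ℂ) • (Bᴴ *ᵥ s)) := by
    have h1 : Rmat D γ *ᵥ v = Dᴴ *ᵥ (D *ᵥ v) - ((γ : ℂ) ^ 2) • v := by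
      simp [Rmat, Matrix.sub_mulVec, Matrix.smul_mulVec, Matrix.mulVec_mulVec]
    rw [h1, hDv, Matrix.mulVec_sub, Matrix.mulVec_smul, hDu]
    module
  have hSu : Smat D γ *ᵥ u = -((γ : ℂ) • (C *ᵥ q) + D *ᵥ (Bᴴ *ᵥ s)) := by
    have h1 : Smat D γ *ᵥ u = D *ᵥ (Dᴴ *ᵥ u) - ((γ : ℂ) ^ 2) • u := by
      simp [Smat, Matrix.sub_mulVec, Matrix.smul_mulVec, Matrix.mulVec_mulVec]
    rw [h1, hDu, Matrix.mulVec_sub, Matrix.mulVec_smul, hDv]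
    module
  -- invertibility of R and S
  have hRd : IsUnit (Rmat D γ).det := by
    rw [isUnit_iff_ne_zero]
    intro hdet
    obtain ⟨v0, hv0ne, hv0⟩ := (Matrix.exists_mulVec_eq_zero_iff).mpr hdet
    have hDDv0 : Dᴴ *ᵥ (D *ᵥ v0) = ((γ : ℂ) ^ 2) • v0 := by
      have h1 : Rmat D γ *ᵥ v0 = Dᴴ *ᵥ (D *ᵥ v0) - ((γ : ℂ) ^ 2) • v0 := by
        simp [Rmat, Matrix.sub_mulVec, Matrix.smul_mulVec, Matrix.mulVec_mulVec]
      rw [h1] at hv0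
      linear_combination (norm := module) hv0
    apply hD
    refine ⟨(γ : ℂ)⁻¹ • (D *ᵥ v0), v0, ?_, hv0ne, ?_, ?_⟩
    · intro h0
      have hDv0 : D *ᵥ v0 = 0 := by
        have := congrArg (fun w => (γ : ℂ) • w) h0
        simpa [smul_smul, mul_inv_cancel₀ hγc] using this
      rw [hDv0, Matrix.mulVec_zero] at hDDv0
      exact hv0ne (by simpa [smul_eq_zero, pow_eq_zero_iff, hγc] using hDDv0.symm)
    · rw [smul_smul, mul_inv_cancel₀ hγc, one_smul]
    · rw [Matrix.mulVec_smul, hDDv0, smul_smul]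
      congr 1
      field_simp
  have hSd : IsUnit (Smat D γ).det := by
    rw [isUnit_iff_ne_zero]
    intro hdet
    obtain ⟨u0, hu0ne, hu0⟩ := (Matrix.exists_mulVec_eq_zero_iff).mpr hdet
    have hDDu0 : D *ᵥ (Dᴴ *ᵥ u0) = ((γ : ℂ) ^ 2) • u0 := by
      have h1 : Smat D γ *ᵥ u0 = D *ᵥ (Dᴴ *ᵥ u0) - ((γ : ℂ) ^ 2) • u0 := by
        simp [Smat, Matrix.sub_mulVec, Matrix.smul_mulVec, Matrix.mulVec_mulVec]
      rw [h1] at hu0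
      linear_combination (norm := module) hu0
    apply hD
    refine ⟨u0, (γ : ℂ)⁻¹ • (Dᴴ *ᵥ u0), hu0ne, ?_, ?_, ?_⟩
    · intro h0
      have hDu0 : Dᴴ *ᵥ u0 = 0 := by
        have := congrArg (fun w => (γ : ℂ) • w) h0
        simpa [smul_smul, mul_inv_cancel₀ hγc] using this
      rw [hDu0, Matrix.mulVec_zero] at hDDu0
      exact hu0ne (by simpa [smul_eq_zero, pow_eq_zero_iff, hγc] using hDDu0.symm)
    · rw [Matrix.mulVec_smul, hDDu0, smul_smul]
      congr 1
      field_simp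
    · rw [smul_smul, mul_inv_cancel₀ hγc, one_smul]
  -- nonzeroness
  have hqs : Sum.elim q s ≠ 0 := by
    intro h0
    have hq0 : q = 0 := funext fun i => congrFun h0 (Sum.inl i)
    have hs0 : s = 0 := funext fun i => congrFun h0 (Sum.inr i)
    have : Rmat D γ *ᵥ v = 0 := by simp [hRv, hq0, hs0]
    have hv0 : v = 0 := by
      have := congrArg (fun w => (Rmat D γ)⁻¹ *ᵥ w) this
      simpa [Matrix.mulVec_mulVec, Matrix.nonsing_inv_mul _ hRd, Matrix.one_mulVec] using this
    exact hv hv0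
  refine ⟨hqs, ?_⟩
  -- expressions for B *ᵥ v and Cᴴ *ᵥ u
  have hvinv : v = (Rmat D γ)⁻¹ *ᵥ (Rmat D γ *ᵥ v) := by
    rw [Matrix.mulVec_mulVec, Matrix.nonsing_inv_mul _ hRd, Matrix.one_mulVec]
  have huinv : u = (Smat D γ)⁻¹ *ᵥ (Smat D γ *ᵥ u) := by
    rw [Matrix.mulVec_mulVec, Matrix.nonsing_inv_mul _ hSd, Matrix.one_mulVec]
  have hBv : B *ᵥ v = -((B * (Rmat D γ)⁻¹ * Dᴴ * C) *ᵥ q)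
      - (γ : ℂ) • ((B * (Rmat D γ)⁻¹ * Bᴴ) *ᵥ s) := by
    conv_lhs => rw [hvinv, hRv]
    simp only [Matrix.mulVec_neg, Matrix.mulVec_add, Matrix.mulVec_smul, Matrix.mulVec_mulVec,
      Matrix.mul_assoc]
    module
  have hSDinv : (Smat D γ)⁻¹ * D = D * (Rmat D γ)⁻¹ := by
    have hDR : D * Rmat D γ = Smat D γ * D := by
      simp [Rmat, Smat, Matrix.mul_sub, Matrix.sub_mul, Matrix.mul_smul, Matrix.smul_mul,
        Matrix.mul_assoc]
    have := congrArg (fun M => (Smat D γ)⁻¹ * (M * (Rmat D γ)⁻¹)) hDR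
    simpa [Matrix.mul_assoc, Matrix.mul_nonsing_inv _ hRd, Matrix.mul_one,
      Matrix.nonsing_inv_mul_cancel_left _ _ hSd] using this
  have hCu : Cᴴ *ᵥ u = -((γ : ℂ) • ((Cᴴ * (Smat D γ)⁻¹ * C) *ᵥ q))
      - (Cᴴ * D * (Rmat D γ)⁻¹ * Bᴴ) *ᵥ s := by
    conv_lhs => rw [huinv, hSu]
    have hrw : Cᴴ * D * (Rmat D γ)⁻¹ * Bᴴ = Cᴴ * ((Smat D γ)⁻¹ * (D * Bᴴ)) := by
      rw [Matrix.mul_assoc Cᴴ D ((Rmat D γ)⁻¹), ← hSDinv]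
      simp [Matrix.mul_assoc]
    rw [hrw]
    simp only [Matrix.mulVec_neg, Matrix.mulVec_add, Matrix.mulVec_smul, Matrix.mulVec_mulVec,
      Matrix.mul_assoc]
    module
  -- top equation
  have htop : z • (E *ᵥ q) = (A - B * (Rmat D γ)⁻¹ * Dᴴ * C) *ᵥ q
      + (-((γ : ℂ) • (B * (Rmat D γ)⁻¹ * Bᴴ))) *ᵥ s := by
    have h1 : z • (E *ᵥ q) - A *ᵥ q = B *ᵥ v := by
      rw [← hq']
      simp [hZdef, Matrix.sub_mulVec, Matrix.smul_mulVec]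
    rw [Matrix.sub_mulVec, Matrix.neg_mulVec, Matrix.smul_mulVec]
    have := h1.trans hBv
    linear_combination (norm := module) this
  -- bottom equation
  have hbot : z • ((-((γ : ℂ) • (Cᴴ * (Smat D γ)⁻¹ * C))) *ᵥ q
      + (Aᴴ - Cᴴ * D * (Rmat D γ)⁻¹ * Bᴴ) *ᵥ s) = Eᴴ *ᵥ s := by
    have h1 : (starRingEnd ℂ) z • (Eᴴ *ᵥ s) - Aᴴ *ᵥ s = Cᴴ *ᵥ u := by
      rw [← hs']
      simp [hZdef, Matrix.conjTranspose_sub, Matrix.conjTranspose_smul, Matrix.sub_mulVec,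
        Matrix.smul_mulVec]
    have h2 : Eᴴ *ᵥ s = z • (Aᴴ *ᵥ s + Cᴴ *ᵥ u) := by
      have := congrArg (fun w => z • w) h1
      simp only [smul_sub, smul_smul, hz1, one_smul] at this
      linear_combination (norm := module) this
    rw [h2, hCu, Matrix.sub_mulVec, Matrix.neg_mulVec, Matrix.smul_mulVec]
    module
  -- assemble
  rw [Matrix.fromBlocks_mulVec, Matrix.fromBlocks_mulVec]
  have helim : ∀ (a b : Fin n → ℂ), z • Sum.elim a b = Sum.elim (z • a) (z • b) := by
    intro a b; funext x; cases x <;> rfl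
  rw [helim]
  refine congrArg₂ Sum.elim ?_ ?_
  · simpa [Matrix.zero_mulVec] using htop
  · simpa [Matrix.zero_mulVec] using hbot
end

section
/- Let γ be a singular value of G(iω) = C(iωE - A)^{-1}B + D with singular vectors u, v (G(iω)v = γu, G(iω)*u = γv, u,v nonzero), where iωE - A is invertible and γ is not a singular value of D. Define q = (iωE - A)^{-1}Bv and s = (iωE - A)^{-*}C*u. Then (q, s) ∈ ℂ^{2n} is nonzero. -/
open Matrix Complex

/-- If `γ` is a singular value of `G(iω)` with singular vectors `u, v`, and `γ` is not a
singular value of `D`, then the vector `(q, s)` with `q = (iωE - A)⁻¹ B v` and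
`s = (iωE - A)⁻* C* u` is nonzero. -/
theorem pencil_vector_nonzero {n m p : ℕ}
    (A E : Matrix (Fin n) (Fin n) ℂ) (B : Matrix (Fin n) (Fin m) ℂ)
    (C : Matrix (Fin p) (Fin n) ℂ) (D : Matrix (Fin p) (Fin m) ℂ)
    (ω γ : ℝ) (hγ : 0 < γ) (hD : ¬ IsSingularValue γ D)
    (hZ : IsUnit ((Complex.I * (ω : ℂ)) • E - A))
    (u : Fin p → ℂ) (v : Fin m → ℂ) (hu : u ≠ 0) (hv : v ≠ 0)
    (hGv : (C * ((Complex.I * (ω : ℂ)) • E - A)⁻¹ * B + D) *ᵥ v = (γ : ℂ) • u)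
    (hGu : (C * ((Complex.I * (ω : ℂ)) • E - A)⁻¹ * B + D)ᴴ *ᵥ u = (γ : ℂ) • v)
    (q s : Fin n → ℂ)
    (hq : q = ((Complex.I * (ω : ℂ)) • E - A)⁻¹ *ᵥ (B *ᵥ v))
    (hs : s = (((Complex.I * (ω : ℂ)) • E - A)⁻¹)ᴴ *ᵥ (Cᴴ *ᵥ u)) :
    Sum.elim q s ≠ 0 := by
  intro h0
  have hq0 : q = 0 := funext fun i => congrFun h0 (Sum.inl i)
  have hs0 : s = 0 := funext fun i => congrFun h0 (Sum.inr i)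
  set Z := (Complex.I * (ω : ℂ)) • E - A with hZdef
  apply hD
  refine ⟨u, v, hu, hv, ?_, ?_⟩
  · have h1 : (C * Z⁻¹ * B) *ᵥ v = C *ᵥ q := by
      rw [hq, Matrix.mulVec_mulVec, Matrix.mulVec_mulVec]
    have := hGv
    rw [Matrix.add_mulVec, h1, hq0, Matrix.mulVec_zero, zero_add] at this
    exact this
  · have h2 : (C * Z⁻¹ * B)ᴴ *ᵥ u = Bᴴ *ᵥ s := by
      rw [hs, Matrix.mulVec_mulVec, Matrix.mulVec_mulVec,
        Matrix.conjTranspose_mul, Matrix.conjTranspose_mul, Matrix.mul_assoc]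
    have := hGu
    rw [Matrix.conjTranspose_add, Matrix.add_mulVec, h2, hs0, Matrix.mulVec_zero,
      zero_add] at this
    exact this
end
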